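/- Let K = ℚ(√−D) be an imaginary quadratic field with ring of integers O_K. For x ≥ 2, 0 ≤ h ≤ x, and 1 ≤ m ≤ 2√(x+h), the number of elements α ∈ O_K with (√x − 1)²/m² ≤ N(α) ≤ (√(x+h) + 1)²/m² is ≪ h/m² + √(x+h)/m, where N denotes the norm and the implied constant is absolute over the imaginary quadratic fields considered. -/

import Mathlib

/-!
An imaginary quadratic field has a single infinite place `w`, so `|N(α)| = w(α)²` and, for distinct
integers, `w(α - β)² = |N(α - β)| ≥ 1`. Embedding `O_K` in `ℂ` through `w`, the integers counted
are `1`-separated points of the annulus `r ≤ |z| ≤ R` with `r = (√x - 1)/m`, `R = (√(x+h) + 1)/m`.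
The disjoint discs of radius `1/2` around them lie in the annulus thickened by `1/2`, and comparing
areas bounds their number by `4(R² - r² + R + r) + 1 ≪ h/m² + √(x+h)/m`, whatever the field.
-/

open NumberField InfinitePlace MeasureTheory Metric Real

lemma natCard_subtype_le_of_forall_finset {α : Type*} {p : α → Prop} {B : ℝ} (hB : 0 ≤ B)
    (h : ∀ S : Finset α, (∀ a ∈ S, p a) → (S.card : ℝ) ≤ B) :
    (Nat.card {a // p a} : ℝ) ≤ B := by
  rcases Set.finite_or_infinite {a | p a} with hfin | hinf
  · rw [← Set.coe_ofPred, Nat.card_eq_card_finite_toFinset hfin]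
    exact h _ fun a ha => hfin.mem_toFinset.mp ha
  · have : Infinite {a // p a} := hinf.to_subtype
    simpa using hB

namespace Complex

lemma measureReal_ball (a : ℂ) {ρ : ℝ} (hρ : 0 ≤ ρ) : volume.real (ball a ρ) = π * ρ ^ 2 := by
  simp [measureReal_def, ENNReal.toReal_ofReal hρ, mul_comm]

lemma measureReal_closedBall (a : ℂ) {ρ : ℝ} (hρ : 0 ≤ ρ) :
    volume.real (closedBall a ρ) = π * ρ ^ 2 := by
  simp [measureReal_def, ENNReal.toReal_ofReal hρ, mul_comm]

lemma card_le_of_pairwise_one_le_dist {T : Finset ℂ} {r R : ℝ} (hr : 0 ≤ r) (hrR : r ≤ R)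
    (hsep : (T : Set ℂ).Pairwise fun z w => 1 ≤ dist z w)
    (hmem : ∀ z ∈ T, r ≤ ‖z‖ ∧ ‖z‖ ≤ R) :
    (T.card : ℝ) ≤ 4 * (R ^ 2 - r ^ 2 + R + r) + 1 := by
  set U := ⋃ z ∈ T, ball z (1 / 2)
  have hU : volume.real U = T.card * (π * (1 / 2) ^ 2) := by
    rw [measureReal_biUnion_finset
      (fun z hz w hw hzw => ball_disjoint_ball (by linarith [hsep hz hw hzw]))
      (fun _ _ => measurableSet_ball)]
    simp [Complex.measureReal_ball]
  have hnorm {w : ℂ} (hw : w ∈ U) : r - 1 / 2 < ‖w‖ ∧ ‖w‖ < R + 1 / 2 := by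
    obtain ⟨z, hz, hwz⟩ := Set.mem_iUnion₂.mp hw
    rw [mem_ball, dist_eq_norm] at hwz
    have hz := hmem z hz
    constructor <;> linarith [abs_lt.mp ((abs_norm_sub_norm_le w z).trans_lt hwz)]
  have hdisj : Disjoint U (ball 0 (max (r - 1 / 2) 0)) := by
    refine Set.disjoint_left.mpr fun w hwU hwt => ?_
    rw [mem_ball_zero_iff, lt_max_iff] at hwt
    have := hnorm hwU
    rcases hwt with hwt | hwt <;> linarith [norm_nonneg w]
  have hsub : U ∪ ball 0 (max (r - 1 / 2) 0) ⊆ closedBall 0 (R + 1 / 2) := by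
    refine Set.union_subset (fun w hw => mem_closedBall_zero_iff.mpr (hnorm hw).2.le) ?_
    exact ball_subset_closedBall.trans
      (closedBall_subset_closedBall (max_le (by linarith) (by linarith)))
  have hvol : volume.real U + volume.real (ball (0 : ℂ) (max (r - 1 / 2) 0)) ≤
      volume.real (closedBall (0 : ℂ) (R + 1 / 2)) := by
    have hU_fin : volume U ≠ ⊤ :=
      ((measure_mono (Set.subset_union_left.trans hsub)).trans_lt measure_closedBall_lt_top).ne
    rw [← measureReal_union hdisj measurableSet_ball hU_fin]
    exact measureReal_mono hsub measure_closedBall_lt_top.ne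
  rw [hU, Complex.measureReal_ball _ (le_max_right _ _),
    Complex.measureReal_closedBall _ (by linarith)] at hvol
  have hmax : r ^ 2 - r ≤ max (r - 1 / 2) 0 ^ 2 := by
    rcases le_total r (1 / 2) with hc | hc
    · rw [max_eq_right (by linarith)]; nlinarith
    · rw [max_eq_left (by linarith)]; nlinarith
  nlinarith [pi_pos]

end Complex

section TotallyComplex

variable {K : Type*} [Field K] [NumberField K] [IsTotallyComplex K]

lemma subsingleton_infinitePlace_of_finrank_eq_two (h2 : Module.finrank ℚ K = 2) :
    Subsingleton (InfinitePlace K) := by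
  have hcard : Fintype.card (InfinitePlace K) = 1 := by
    have := IsTotallyComplex.finrank K
    rw [card_eq_nrRealPlaces_add_nrComplexPlaces, IsTotallyComplex.nrRealPlaces_eq_zero]
    omega
  exact Fintype.card_le_one_iff_subsingleton.mp hcard.le

variable [Subsingleton (InfinitePlace K)]

lemma NumberField.InfinitePlace.sq_eq_abs_norm (w : InfinitePlace K) (x : K) :
    w x ^ 2 = |(Algebra.norm ℚ x : ℝ)| := by
  have := prod_eq_abs_norm x
  rw [Fintype.prod_subsingleton _ w, IsTotallyComplex.mult_eq] at this
  rw [this]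
  push_cast; rfl

lemma card_le_of_norm_mem_Icc {S : Finset (𝓞 K)} {r R : ℝ} (hr : 0 ≤ r) (hrR : r ≤ R)
    (hS : ∀ α ∈ S, r ^ 2 ≤ ((Algebra.norm ℚ (algebraMap (𝓞 K) K α) : ℚ) : ℝ) ∧
      ((Algebra.norm ℚ (algebraMap (𝓞 K) K α) : ℚ) : ℝ) ≤ R ^ 2) :
    (S.card : ℝ) ≤ 4 * (R ^ 2 - r ^ 2 + R + r) + 1 := by
  obtain ⟨w⟩ : Nonempty (InfinitePlace K) := inferInstance
  set f : 𝓞 K → ℂ := fun α => w.embedding (algebraMap (𝓞 K) K α)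
  have hf (α : 𝓞 K) : ‖f α‖ = w (algebraMap (𝓞 K) K α) := w.norm_embedding_eq _
  have hinj : Function.Injective f := fun a b hab =>
    RingOfIntegers.coe_injective (w.embedding.injective hab)
  rw [← Finset.card_image_of_injective S hinj]
  refine Complex.card_le_of_pairwise_one_le_dist hr hrR ?_ ?_
  · rw [Finset.coe_image]
    rintro _ ⟨a, -, rfl⟩ _ ⟨b, -, rfl⟩ hab
    have hf_sub : f a - f b = f (a - b) := by simp [f]
    rw [dist_eq_norm, hf_sub, hf]
    exact one_le_of_lt_one (sub_ne_zero.mpr (ne_of_apply_ne f hab))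
      fun z hz => (hz (Subsingleton.elim z w)).elim
  · simp only [Finset.mem_image]
    rintro _ ⟨a, ha, rfl⟩
    obtain ⟨hra, haR⟩ := hS a ha
    have hsq := w.sq_eq_abs_norm (algebraMap (𝓞 K) K a)
    rw [abs_of_nonneg ((sq_nonneg r).trans hra), ← hf] at hsq
    constructor
    · exact (pow_le_pow_iff_left₀ hr (norm_nonneg _) two_ne_zero).mp (hsq ▸ hra)
    · exact (pow_le_pow_iff_left₀ (norm_nonneg _) (hr.trans hrR) two_ne_zero).mp (hsq ▸ haR)

end TotallyComplex

lemma annulus_packing_bound_le {x h m : ℝ} (hx : 0 ≤ x) (hh : 0 ≤ h) (hm : 1 ≤ m)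
    (hm2 : m ≤ 2 * √(x + h)) :
    4 * (((√(x + h) + 1) / m) ^ 2 - ((√x - 1) / m) ^ 2 + (√(x + h) + 1) / m + (√x - 1) / m) + 1 ≤
      26 * (h / m ^ 2 + √(x + h) / m) := by
  have hm0 : 0 < m := by linarith
  have hsx : √x ≤ √(x + h) := Real.sqrt_le_sqrt (by linarith)
  have hsx1 : 0 ≤ √x := Real.sqrt_nonneg x
  have hsq : √(x + h) ^ 2 = x + h := Real.sq_sqrt (by linarith)
  have hsxq : √x ^ 2 = x := Real.sq_sqrt (by linarith)
  rw [← sub_nonneg]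
  have : 26 * (h / m ^ 2 + √(x + h) / m) -
      (4 * (((√(x + h) + 1) / m) ^ 2 - ((√x - 1) / m) ^ 2 + (√(x + h) + 1) / m + (√x - 1) / m) + 1)
      = (22 * h + 22 * √(x + h) * m - 4 * √x * m - 8 * √(x + h) - 8 * √x - m ^ 2) / m ^ 2 := by
    field_simp
    linear_combination 4 * hsxq - 4 * hsq
  rw [this]
  apply div_nonneg _ (by positivity)
  nlinarith [mul_le_mul_of_nonneg_right hsx hm0.le, mul_le_mul_of_nonneg_right hm2 hm0.le,
    mul_le_mul_of_nonneg_left hm (hsx1.trans hsx)]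

/-- There is an absolute constant `C > 0` such that for every imaginary quadratic field `K`,
all `x ≥ 2`, `0 ≤ h ≤ x` and every integer `1 ≤ m ≤ 2√(x+h)`, the number of elements
`α ∈ O_K` with `(√x − 1)²/m² ≤ N(α) ≤ (√(x+h) + 1)²/m²` is at most
`C (h/m² + √(x+h)/m)`. -/
theorem norm_interval_count_imaginary_quadratic :
    ∃ C : ℝ, 0 < C ∧
      ∀ (K : Type) [Field K] [NumberField K],
        Module.finrank ℚ K = 2 → (∀ φ : K →+* ℝ, False) →
        ∀ x h : ℝ, 2 ≤ x → 0 ≤ h → h ≤ x →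
        ∀ m : ℕ, 1 ≤ m → (m : ℝ) ≤ 2 * Real.sqrt (x + h) →
          (Nat.card {α : 𝓞 K //
              (Real.sqrt x - 1) ^ 2 / (m : ℝ) ^ 2 ≤
                ((Algebra.norm ℚ (algebraMap (𝓞 K) K α) : ℚ) : ℝ) ∧
              ((Algebra.norm ℚ (algebraMap (𝓞 K) K α) : ℚ) : ℝ) ≤
                (Real.sqrt (x + h) + 1) ^ 2 / (m : ℝ) ^ 2} : ℝ) ≤
            C * (h / (m : ℝ) ^ 2 + Real.sqrt (x + h) / (m : ℝ)) := by
  refine ⟨26, by norm_num, fun K _ _ h2 hreal x h hx hh _ m hm hm2 => ?_⟩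
  have : IsTotallyComplex K :=
    ⟨fun w => not_isReal_iff_isComplex.mp fun hw => hreal (embedding_of_isReal hw)⟩
  have := subsingleton_infinitePlace_of_finrank_eq_two h2
  have hm' : (1 : ℝ) ≤ m := by exact_mod_cast hm
  have hsx : 1 ≤ √x := Real.one_le_sqrt.mpr (by linarith)
  have hr : 0 ≤ (√x - 1) / m := by positivity
  have hrR : (√x - 1) / m ≤ (√(x + h) + 1) / m := by
    gcongr
    linarith [Real.sqrt_le_sqrt (show x ≤ x + h by linarith)]
  refine natCard_subtype_le_of_forall_finset (by positivity) fun S hS => ?_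
  calc (S.card : ℝ)
      ≤ 4 * (((√(x + h) + 1) / m) ^ 2 - ((√x - 1) / m) ^ 2 + (√(x + h) + 1) / m
          + (√x - 1) / m) + 1 :=
        card_le_of_norm_mem_Icc hr hrR fun α hα => by simpa only [div_pow] using hS α hα
    _ ≤ 26 * (h / m ^ 2 + √(x + h) / m) := annulus_packing_bound_le (by linarith) hh hm' hm2
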